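/- Let A be an n×n real matrix, B an n×m real matrix, Q a symmetric n×n real matrix, R a symmetric invertible m×m real matrix, and P a symmetric n×n real matrix satisfying the Riccati equation Q + AᵀP + PA − PBR⁻¹BᵀP = 0, with K = R⁻¹BᵀP. Suppose x : ℝ → ℝⁿ is differentiable and u : ℝ → ℝᵐ is such that x′(t) = A·x(t) + B·u(t) for all t. Then for all t, the function t ↦ x(t)ᵀP·x(t) is differentiable with derivative −x(t)ᵀQ·x(t) − u(t)ᵀR·u(t) + (u(t) + K·x(t))ᵀR·(u(t) + K·x(t)). -/

import Mathlib

/-!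
Differentiating gives `d/dt xᵀPx = 2 xᵀP(Ax + Bu) = xᵀ(AᵀP + PA)x + 2 uᵀBᵀPx`. Expanding the square,
`(u + Kx)ᵀR(u + Kx) - uᵀRu = 2 uᵀ(RK)x + xᵀ(KᵀRK)x`, and `RK = BᵀP`, `KᵀRK = PBR⁻¹BᵀP` because `R`
and `P` are symmetric; the Riccati equation `AᵀP + PA = PBR⁻¹BᵀP - Q` then matches the two sides.
-/

open Matrix

section Derivatives

variable {𝕜 : Type*} [NontriviallyNormedField 𝕜] {ι κ : Type*} [Fintype ι] {t : 𝕜}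

theorem HasDerivAt.dotProduct {f g : 𝕜 → ι → 𝕜} {f' g' : ι → 𝕜} (hf : HasDerivAt f f' t)
    (hg : HasDerivAt g g' t) :
    HasDerivAt (fun s => f s ⬝ᵥ g s) (f' ⬝ᵥ g t + f t ⬝ᵥ g') t := by
  rw [_root_.dotProduct, _root_.dotProduct, ← Finset.sum_add_distrib]
  exact HasDerivAt.fun_sum fun i _ => (hasDerivAt_pi.1 hf i).mul (hasDerivAt_pi.1 hg i)

theorem HasDerivAt.mulVec (M : Matrix κ ι 𝕜) {f : 𝕜 → ι → 𝕜} {f' : ι → 𝕜}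
    (hf : HasDerivAt f f' t) : HasDerivAt (fun s => M *ᵥ f s) (M *ᵥ f') t :=
  hasDerivAt_pi.2 fun i => HasDerivAt.fun_sum fun j _ => (hasDerivAt_pi.1 hf j).const_mul (M i j)

end Derivatives

section Riccati

variable {α : Type*} [CommRing α] {ι κ : Type*} [Fintype ι] [Fintype κ] [DecidableEq κ]
  {A P Q : Matrix ι ι α} {B : Matrix ι κ α} {R : Matrix κ κ α} {K : Matrix κ ι α}

theorem Matrix.IsSymm.dotProduct_mulVec_comm {M : Matrix ι ι α} (hM : M.IsSymm) (v w : ι → α) :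
    v ⬝ᵥ (M *ᵥ w) = w ⬝ᵥ (M *ᵥ v) := by
  rw [← dotProduct_transpose_mulVec, hM.eq]

theorem Matrix.mulVec_dotProduct {m n : Type*} [Fintype m] [Fintype n]
    (M : Matrix m n α) (v : n → α) (w : m → α) :
    (M *ᵥ v) ⬝ᵥ w = v ⬝ᵥ (Mᵀ *ᵥ w) := by
  rw [dotProduct_comm, dotProduct_transpose_mulVec]

theorem mul_lqrGain (hRinv : IsUnit R.det) (hK : K = R⁻¹ * Bᵀ * P) : R * K = Bᵀ * P := by
  rw [hK, Matrix.mul_assoc, mul_nonsing_inv_cancel_left _ _ hRinv]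

theorem lqrGain_transpose (hR : R.IsSymm) (hP : P.IsSymm) (hK : K = R⁻¹ * Bᵀ * P) :
    Kᵀ = P * B * R⁻¹ := by
  rw [hK, transpose_mul, transpose_mul, transpose_transpose, transpose_nonsing_inv, hR.eq, hP.eq,
    Matrix.mul_assoc]

theorem riccati_completion_of_squares (hR : R.IsSymm) (hRinv : IsUnit R.det) (hP : P.IsSymm)
    (hRic : Q + Aᵀ * P + P * A - P * B * R⁻¹ * Bᵀ * P = 0) (hK : K = R⁻¹ * Bᵀ * P)
    (x : ι → α) (u : κ → α) :
    (A *ᵥ x + B *ᵥ u) ⬝ᵥ (P *ᵥ x) + x ⬝ᵥ (P *ᵥ (A *ᵥ x + B *ᵥ u)) =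
      -(x ⬝ᵥ (Q *ᵥ x)) - u ⬝ᵥ (R *ᵥ u) + (u + K *ᵥ x) ⬝ᵥ (R *ᵥ (u + K *ᵥ x)) := by
  have hAP : Aᵀ * P + P * A = P * B * R⁻¹ * Bᵀ * P - Q := by
    rw [← sub_eq_zero, ← hRic]; abel
  have lhs : (A *ᵥ x + B *ᵥ u) ⬝ᵥ (P *ᵥ x) + x ⬝ᵥ (P *ᵥ (A *ᵥ x + B *ᵥ u)) =
      x ⬝ᵥ ((Aᵀ * P + P * A) *ᵥ x) + 2 * (u ⬝ᵥ ((Bᵀ * P) *ᵥ x)) := by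
    rw [mulVec_add, dotProduct_add, hP.dotProduct_mulVec_comm x (B *ᵥ u)]
    simp only [add_dotProduct, mulVec_dotProduct, add_mulVec, dotProduct_add, mulVec_mulVec]
    ring
  have rhs : -(x ⬝ᵥ (Q *ᵥ x)) - u ⬝ᵥ (R *ᵥ u) + (u + K *ᵥ x) ⬝ᵥ (R *ᵥ (u + K *ᵥ x)) =
      -(x ⬝ᵥ (Q *ᵥ x)) + 2 * (u ⬝ᵥ ((Bᵀ * P) *ᵥ x)) + x ⬝ᵥ ((Kᵀ * (Bᵀ * P)) *ᵥ x) := by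
    rw [mulVec_add, add_dotProduct, dotProduct_add, dotProduct_add,
      hR.dotProduct_mulVec_comm (K *ᵥ x) u, mulVec_dotProduct K x, mulVec_mulVec, mulVec_mulVec,
      mul_lqrGain hRinv hK]
    ring
  rw [lhs, rhs, hAP, lqrGain_transpose hR hP hK, ← Matrix.mul_assoc, sub_mulVec, dotProduct_sub]
  ring

end Riccati

theorem stmt_11_general (n m : ℕ) (A : Matrix (Fin n) (Fin n) ℝ)
    (B : Matrix (Fin n) (Fin m) ℝ) (Q : Matrix (Fin n) (Fin n) ℝ)
    (R : Matrix (Fin m) (Fin m) ℝ) (hR : R.IsSymm) (hRinv : IsUnit R.det)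
    (P : Matrix (Fin n) (Fin n) ℝ) (hP : P.IsSymm)
    (hRic : Q + Aᵀ * P + P * A - P * B * R⁻¹ * Bᵀ * P = 0)
    (K : Matrix (Fin m) (Fin n) ℝ) (hK : K = R⁻¹ * Bᵀ * P)
    (x : ℝ → Fin n → ℝ) (u : ℝ → Fin m → ℝ)
    (hx : ∀ t : ℝ, HasDerivAt x (A *ᵥ x t + B *ᵥ u t) t) :
    ∀ t : ℝ,
      HasDerivAt (fun s : ℝ => x s ⬝ᵥ (P *ᵥ x s))
        (-(x t ⬝ᵥ (Q *ᵥ x t)) - u t ⬝ᵥ (R *ᵥ u t)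
          + (u t + K *ᵥ x t) ⬝ᵥ (R *ᵥ (u t + K *ᵥ x t))) t := fun t => by
  rw [← riccati_completion_of_squares hR hRinv hP hRic hK]
  exact (hx t).dotProduct ((hx t).mulVec P)

theorem stmt_11 (n m : ℕ) (A : Matrix (Fin n) (Fin n) ℝ)
    (B : Matrix (Fin n) (Fin m) ℝ) (Q : Matrix (Fin n) (Fin n) ℝ) (hQ : Q.IsSymm)
    (R : Matrix (Fin m) (Fin m) ℝ) (hR : R.IsSymm) (hRinv : IsUnit R.det)
    (P : Matrix (Fin n) (Fin n) ℝ) (hP : P.IsSymm)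
    (hRic : Q + Aᵀ * P + P * A - P * B * R⁻¹ * Bᵀ * P = 0)
    (K : Matrix (Fin m) (Fin n) ℝ) (hK : K = R⁻¹ * Bᵀ * P)
    (x : ℝ → Fin n → ℝ) (u : ℝ → Fin m → ℝ)
    (hx : ∀ t : ℝ, HasDerivAt x (A *ᵥ x t + B *ᵥ u t) t) :
    ∀ t : ℝ,
      HasDerivAt (fun s : ℝ => x s ⬝ᵥ (P *ᵥ x s))
        (-(x t ⬝ᵥ (Q *ᵥ x t)) - u t ⬝ᵥ (R *ᵥ u t)
          + (u t + K *ᵥ x t) ⬝ᵥ (R *ᵥ (u t + K *ᵥ x t))) t :=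
  stmt_11_general n m A B Q R hR hRinv P hP hRic K hK x u hx
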